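/- arXiv:1812.07728 — 4 statements merged into one kernel-verified Lean document; each statement's English description precedes it below -/
import Mathlib

section
/- Let Λ ⊆ ℝ^K \ {0} be a nonempty set of nonzero vectors, t ∈ ℝ^K, and let C ⊆ ℝ^N be a convex set such that Σ(ρ) is positive definite for every ρ ∈ C. Assume that for each ρ ∈ C the set { f(λ, ρ) : λ ∈ Λ } is bounded above, where f(λ, ρ) = max(0, λᵀ(t − μ(ρ)))² / (λᵀ Σ(ρ) λ). Then the function g(ρ) = sup_{λ ∈ Λ} f(λ, ρ) is convex on C. (Proposition 1) -/
open Matrix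

/-- The mean vector `μ(ρ)_k = Σ_i Σ_j q_{ijk} ρ_{ij}`. -/
noncomputable def muVec {I K : ℕ} (n : Fin I → ℕ)
    (q : (i : Fin I) → Fin (n i) → Fin K → ℝ)
    (ρ : (i : Fin I) → Fin (n i) → ℝ) : Fin K → ℝ :=
  fun k => ∑ i, ∑ j, q i j k * ρ i j

/-- The K×K covariance matrix `Σ(ρ)`. -/
noncomputable def SigmaMat {I K : ℕ} (n : Fin I → ℕ)
    (q : (i : Fin I) → Fin (n i) → Fin K → ℝ)
    (ρ : (i : Fin I) → Fin (n i) → ℝ) : Matrix (Fin K) (Fin K) ℝ :=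
  Matrix.of fun k l => ∑ i, ((∑ j, q i j k * q i j l * ρ i j)
    - (∑ j, q i j k * ρ i j) * (∑ j, q i j l * ρ i j))

/-- The objective `f(λ, ρ) = max(0, λᵀ(t − μ(ρ)))² / (λᵀ Σ(ρ) λ)`. -/
noncomputable def objF {I K : ℕ} (n : Fin I → ℕ)
    (q : (i : Fin I) → Fin (n i) → Fin K → ℝ) (t : Fin K → ℝ)
    (lam : Fin K → ℝ) (ρ : (i : Fin I) → Fin (n i) → ℝ) : ℝ :=
  (max 0 (lam ⬝ᵥ (t - muVec n q ρ))) ^ 2 / (lam ⬝ᵥ (SigmaMat n q ρ) *ᵥ lam)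

/-!
For fixed `λ`, the numerator `max(0, λᵀ(t − μ(ρ)))` is convex and nonnegative because `μ` is
linear, and the denominator `λᵀΣ(ρ)λ = Σᵢ (Σⱼ (λᵀqᵢⱼ)² ρᵢⱼ − (Σⱼ (λᵀqᵢⱼ) ρᵢⱼ)²)` is a sum of
"linear minus square of linear" terms, hence concave, and it is positive on `C`. A convex
nonnegative function squared over a concave positive one is convex (Sedrakyan's inequality
`(u + v)² / (p + r) ≤ u² / p + v² / r`), so each `f(λ, ·)` is convex on `C`, and so is their
pointwise supremum.
-/

theorem ConcaveOn.sum {𝕜 E β ι : Type*} [Semiring 𝕜] [PartialOrder 𝕜] [AddCommMonoid E]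
    [AddCommMonoid β] [PartialOrder β] [IsOrderedAddMonoid β] [Module 𝕜 E] [Module 𝕜 β]
    {s : Set E} {t : Finset ι} {f : ι → E → β} (hs : Convex 𝕜 s)
    (hf : ∀ i ∈ t, ConcaveOn 𝕜 s (f i)) : ConcaveOn 𝕜 s fun x => ∑ i ∈ t, f i x := by
  classical
  induction t using Finset.induction_on with
  | empty => simpa using concaveOn_const 0 hs
  | insert i t hi ih =>
    simp_rw [Finset.sum_insert hi]
    exact (hf i (Finset.mem_insert_self i t)).add
      (ih fun j hj => hf j (Finset.mem_insert_of_mem hj))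

section Convexity

variable {E : Type*} [AddCommMonoid E] [Module ℝ E] {s : Set E}

theorem LinearMap.concaveOn_sub_sq (ℓ m : E →ₗ[ℝ] ℝ) (hs : Convex ℝ s) :
    ConcaveOn ℝ s fun x => ℓ x - m x ^ 2 :=
  (ℓ.concaveOn hs).sub <|
    ((even_two.convexOn_pow (𝕜 := ℝ)).comp_linearMap m).subset (Set.subset_univ s) hs

theorem ConvexOn.sq_div {f g : E → ℝ} (hf : ConvexOn ℝ s f) (hf₀ : ∀ x ∈ s, 0 ≤ f x)
    (hg : ConcaveOn ℝ s g) (hg₀ : ∀ x ∈ s, 0 < g x) : ConvexOn ℝ s fun x => f x ^ 2 / g x := by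
  refine convexOn_iff_forall_pos.mpr ⟨hf.1, fun x hx y hy a b ha hb hab => ?_⟩
  have hz : a • x + b • y ∈ s := hf.1 hx hy ha.le hb.le hab
  have hmix : 0 < a * g x + b * g y := by have := hg₀ x hx; have := hg₀ y hy; positivity
  calc f (a • x + b • y) ^ 2 / g (a • x + b • y)
      ≤ (a * f x + b * f y) ^ 2 / (a * g x + b * g y) :=
        div_le_div₀ (by positivity) (pow_le_pow_left₀ (hf₀ _ hz) (hf.2 hx hy ha.le hb.le hab) 2)
          hmix (hg.2 hx hy ha.le hb.le hab)
    _ ≤ (a * f x) ^ 2 / (a * g x) + (b * f y) ^ 2 / (b * g y) := by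
        simpa [Fin.sum_univ_two] using Finset.sq_sum_div_le_sum_sq_div Finset.univ
          ![a * f x, b * f y] (g := ![a * g x, b * g y]) (by
            have := hg₀ x hx; have := hg₀ y hy
            intro i _; fin_cases i <;> simp <;> positivity)
    _ = a * (f x ^ 2 / g x) + b * (f y ^ 2 / g y) := by
        have := (hg₀ x hx).ne'; have := (hg₀ y hy).ne'
        field_simp

theorem ConvexOn.sSup_image {ι : Type*} {Λ : Set ι} {f : ι → E → ℝ} (hs : Convex ℝ s)
    (hf : ∀ i ∈ Λ, ConvexOn ℝ s (f i)) (hbdd : ∀ x ∈ s, BddAbove ((f · x) '' Λ)) :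
    ConvexOn ℝ s fun x => sSup ((f · x) '' Λ) := by
  rcases Λ.eq_empty_or_nonempty with rfl | hΛ
  -- `sSup ∅ = 0` in `ℝ`
  · simpa using convexOn_const 0 hs
  refine ⟨hs, fun x hx y hy a b ha hb hab => csSup_le (hΛ.image _) ?_⟩
  rintro _ ⟨i, hi, rfl⟩
  calc f i (a • x + b • y) ≤ a • f i x + b • f i y := (hf i hi).2 hx hy ha hb hab
    _ ≤ a • sSup ((f · x) '' Λ) + b • sSup ((f · y) '' Λ) := by
        gcongr
        exacts [le_csSup (hbdd x hx) ⟨i, hi, rfl⟩, le_csSup (hbdd y hy) ⟨i, hi, rfl⟩]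

end Convexity

theorem sigmaMat_eq_sum {I K : ℕ} (n : Fin I → ℕ)
    (q : (i : Fin I) → Fin (n i) → Fin K → ℝ) (ρ : (i : Fin I) → Fin (n i) → ℝ) :
    SigmaMat n q ρ = ∑ i, (∑ j, ρ i j • vecMulVec (q i j) (q i j)
      - vecMulVec (∑ j, ρ i j • q i j) (∑ j, ρ i j • q i j)) := by
  ext k l
  simp [SigmaMat, vecMulVec, Matrix.sum_apply, mul_comm, mul_left_comm]

theorem dotProduct_sigmaMat_mulVec {I K : ℕ} (n : Fin I → ℕ)
    (q : (i : Fin I) → Fin (n i) → Fin K → ℝ) (lam : Fin K → ℝ)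
    (ρ : (i : Fin I) → Fin (n i) → ℝ) :
    lam ⬝ᵥ SigmaMat n q ρ *ᵥ lam
      = ∑ i, ((fun j => (lam ⬝ᵥ q i j) ^ 2) ⬝ᵥ ρ i - ((fun j => lam ⬝ᵥ q i j) ⬝ᵥ ρ i) ^ 2) := by
  simp only [sigmaMat_eq_sum, sum_mulVec, sub_mulVec, smul_mulVec, vecMulVec_mulVec,
    dotProduct_sum, dotProduct_sub, dotProduct_smul, dotProduct_comm _ lam]
  simp [dotProduct, sq, mul_comm]

theorem muVec_eq_sum {I K : ℕ} (n : Fin I → ℕ)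
    (q : (i : Fin I) → Fin (n i) → Fin K → ℝ) (ρ : (i : Fin I) → Fin (n i) → ℝ) :
    muVec n q ρ = ∑ i, ∑ j, ρ i j • q i j := by
  ext k
  simp [muVec, Finset.sum_apply, mul_comm]

theorem dotProduct_muVec {I K : ℕ} (n : Fin I → ℕ)
    (q : (i : Fin I) → Fin (n i) → Fin K → ℝ) (lam : Fin K → ℝ)
    (ρ : (i : Fin I) → Fin (n i) → ℝ) :
    lam ⬝ᵥ muVec n q ρ = ∑ i, (fun j => lam ⬝ᵥ q i j) ⬝ᵥ ρ i := by
  simp only [muVec_eq_sum, dotProduct_sum, dotProduct_smul]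
  simp [dotProduct, mul_comm]

theorem convexOn_objF {I K : ℕ} (n : Fin I → ℕ) (q : (i : Fin I) → Fin (n i) → Fin K → ℝ)
    (t lam : Fin K → ℝ) {C : Set ((i : Fin I) → Fin (n i) → ℝ)} (hC : Convex ℝ C)
    (hpd : ∀ ρ ∈ C, (SigmaMat n q ρ).PosDef) : ConvexOn ℝ C (objF n q t lam) := by
  rcases eq_or_ne lam 0 with rfl | hlam
  -- for `λ = 0` the objective is `0 / 0 = 0`
  · exact (convexOn_const 0 hC).congr fun ρ _ => by simp [objF]
  let stratumForm (i : Fin I) (c : Fin (n i) → ℝ) : ((i : Fin I) → Fin (n i) → ℝ) →ₗ[ℝ] ℝ :=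
    (dotProductBilin ℝ ℝ c).comp (LinearMap.proj i)
  let w (i : Fin I) : Fin (n i) → ℝ := fun j => lam ⬝ᵥ q i j
  have hnum : ConvexOn ℝ C fun ρ => max 0 (lam ⬝ᵥ (t - muVec n q ρ)) := by
    have := (convexOn_const (lam ⬝ᵥ t) hC).sub ((∑ i, stratumForm i (w i)).concaveOn hC)
    refine (convexOn_const 0 hC).sup (this.congr fun ρ _ => ?_)
    simp [dotProduct_sub, dotProduct_muVec, stratumForm, w]
  have hden : ConcaveOn ℝ C fun ρ => lam ⬝ᵥ SigmaMat n q ρ *ᵥ lam := by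
    simp_rw [dotProduct_sigmaMat_mulVec]
    exact ConcaveOn.sum hC fun i _ =>
      (stratumForm i (w i ^ 2)).concaveOn_sub_sq (stratumForm i (w i)) hC
  refine hnum.sq_div (fun _ _ => le_max_left _ _) hden fun ρ hρ => ?_
  simpa using (hpd ρ hρ).dotProduct_mulVec_pos hlam

theorem stmt4_general {I K : ℕ} (n : Fin I → ℕ)
    (q : (i : Fin I) → Fin (n i) → Fin K → ℝ)
    (Λ : Set (Fin K → ℝ))
    (t : Fin K → ℝ)
    (C : Set ((i : Fin I) → Fin (n i) → ℝ)) (hC : Convex ℝ C)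
    (hpd : ∀ ρ ∈ C, (SigmaMat n q ρ).PosDef)
    (hbdd : ∀ ρ ∈ C, BddAbove ((fun lam => objF n q t lam ρ) '' Λ)) :
    ConvexOn ℝ C (fun ρ => sSup ((fun lam => objF n q t lam ρ) '' Λ)) :=
  ConvexOn.sSup_image hC (fun lam _ => convexOn_objF n q t lam hC hpd) hbdd

/-- Proposition 1: for a nonempty set `Λ ⊆ ℝ^K \ {0}`, `t ∈ ℝ^K`,
and a convex set `C` on which `Σ(ρ)` is positive definite, if for each `ρ ∈ C`
the set `{f(λ, ρ) : λ ∈ Λ}` is bounded above, then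
`g(ρ) = sup_{λ ∈ Λ} f(λ, ρ)` is convex on `C`. -/
theorem stmt4 {I K : ℕ} (n : Fin I → ℕ)
    (q : (i : Fin I) → Fin (n i) → Fin K → ℝ)
    (Λ : Set (Fin K → ℝ)) (hΛne : Λ.Nonempty) (hΛ0 : (0 : Fin K → ℝ) ∉ Λ)
    (t : Fin K → ℝ)
    (C : Set ((i : Fin I) → Fin (n i) → ℝ)) (hC : Convex ℝ C)
    (hpd : ∀ ρ ∈ C, (SigmaMat n q ρ).PosDef)
    (hbdd : ∀ ρ ∈ C, BddAbove ((fun lam => objF n q t lam ρ) '' Λ)) :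
    ConvexOn ℝ C (fun ρ => sSup ((fun lam => objF n q t lam ρ) '' Λ)) :=
  stmt4_general n q Λ t C hC hpd hbdd
end

section
/- Let Σ be a K×K real symmetric positive definite matrix, x ∈ ℝ^K, and set h = Σ⁻¹ x. Then hᵀ Σ h − inf_{λ ∈ ℝ^K, λ_k ≥ 0 for all k} (h − λ)ᵀ Σ (h − λ) = sup_{λ ∈ Λ₊} max(0, λᵀ x)² / (λᵀ Σ λ); that is, the squared Σ-norm of the projection of h onto the nonnegative orthant equals the supremum over coherent linear combinations of the squared positive part of the standardized deviate. -/
/-!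
With `h = Σ⁻¹ x`, the decrease `hᵀΣh - (h - λ)ᵀΣ(h - λ)` equals `2 λᵀx - λᵀΣλ`. Along a ray
`t • λ`, `t ≥ 0`, this is a concave quadratic in `t` whose maximum is `max(0, λᵀx)² / λᵀΣλ`.
The orthant, like any cone, is a union of such rays, so the supremum of the decrease over the orthant is the
supremum of these ray maxima.
-/

open Matrix

lemma isGreatest_image_Ici_two_mul_sub_sq_mul {b d : ℝ} (hd : 0 < d) :
    IsGreatest ((fun t => 2 * t * b - t ^ 2 * d) '' Set.Ici 0) (max 0 b ^ 2 / d) := by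
  refine ⟨⟨max 0 b / d, div_nonneg (le_max_left _ _) hd.le, ?_⟩, ?_⟩
  · rcases le_total b 0 with hb | hb
    · simp [max_eq_left hb]
    · simp only [max_eq_right hb]
      field_simp
      ring
  · rintro _ ⟨t, ht : 0 ≤ t, rfl⟩
    show 2 * t * b - t ^ 2 * d ≤ max 0 b ^ 2 / d
    rcases le_total b 0 with hb | hb
    · rw [max_eq_left hb, zero_pow two_ne_zero, zero_div]
      nlinarith [mul_nonneg ht (neg_nonneg.2 hb), sq_nonneg t]
    · rw [max_eq_right hb, le_div_iff₀ hd]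
      nlinarith [sq_nonneg (t * d - b)]

namespace Matrix

variable {n : Type*} [Fintype n] {S : Matrix n n ℝ}

lemma IsSymm.dotProduct_mulVec_comm (hS : S.IsSymm) (v w : n → ℝ) :
    v ⬝ᵥ S *ᵥ w = w ⬝ᵥ S *ᵥ v := by
  rw [dotProduct_mulVec, ← mulVec_transpose, hS.eq, dotProduct_comm]

lemma IsSymm.dotProduct_mulVec_sub_smul (hS : S.IsSymm) (h l : n → ℝ) (t : ℝ) :
    h ⬝ᵥ S *ᵥ h - (h - t • l) ⬝ᵥ S *ᵥ (h - t • l)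
      = 2 * t * (l ⬝ᵥ S *ᵥ h) - t ^ 2 * (l ⬝ᵥ S *ᵥ l) := by
  have := hS.dotProduct_mulVec_comm h l
  simp only [mulVec_sub, mulVec_smul, dotProduct_sub, sub_dotProduct, dotProduct_smul,
    smul_dotProduct, smul_eq_mul] at *
  rw [this]
  ring

lemma PosDef.isGreatest_image_Ici_dotProduct_mulVec_sub_smul (hS : S.PosDef) (h : n → ℝ)
    {l : n → ℝ} (hl : l ≠ 0) :
    IsGreatest ((fun t : ℝ => h ⬝ᵥ S *ᵥ h - (h - t • l) ⬝ᵥ S *ᵥ (h - t • l)) '' Set.Ici 0)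
      (max 0 (l ⬝ᵥ S *ᵥ h) ^ 2 / (l ⬝ᵥ S *ᵥ l)) := by
  have hsymm : S.IsSymm := isHermitian_iff_isSymm.mp hS.isHermitian
  simp only [hsymm.dotProduct_mulVec_sub_smul]
  exact isGreatest_image_Ici_two_mul_sub_sq_mul (by simpa using hS.dotProduct_mulVec_pos hl)

theorem PosDef.sub_sInf_dotProduct_mulVec_sub_eq_sSup [DecidableEq n] (hS : S.PosDef)
    (C : Set (n → ℝ)) (hC : ∀ l ∈ C, ∀ t : ℝ, 0 ≤ t → t • l ∈ C)
    (hC_ne : ∃ l ∈ C, l ≠ 0) (x : n → ℝ) :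
    (S⁻¹ *ᵥ x) ⬝ᵥ S *ᵥ (S⁻¹ *ᵥ x)
      - sInf {y : ℝ | ∃ l ∈ C, y = ((S⁻¹ *ᵥ x) - l) ⬝ᵥ S *ᵥ ((S⁻¹ *ᵥ x) - l)}
      = sSup {y : ℝ | ∃ l ∈ C, l ≠ 0 ∧ y = (max 0 (l ⬝ᵥ x)) ^ 2 / (l ⬝ᵥ S *ᵥ l)} := by
  set h := S⁻¹ *ᵥ x
  have hx : S *ᵥ h = x := by
    rw [mulVec_mulVec, mul_nonsing_inv S (isUnit_iff_ne_zero.mpr hS.det_pos.ne'), one_mulVec]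
  set B := {y : ℝ | ∃ l ∈ C, l ≠ 0 ∧ y = (max 0 (l ⬝ᵥ x)) ^ 2 / (l ⬝ᵥ S *ᵥ l)}
  have ray : ∀ l ∈ C, l ≠ 0 → IsGreatest
      ((fun t : ℝ => h ⬝ᵥ S *ᵥ h - (h - t • l) ⬝ᵥ S *ᵥ (h - t • l)) '' Set.Ici 0)
      (max 0 (l ⬝ᵥ x) ^ 2 / (l ⬝ᵥ S *ᵥ l)) := fun l _ hl => by
    simpa only [hx] using hS.isGreatest_image_Ici_dotProduct_mulVec_sub_smul h hl
  have hQ_nonneg (v : n → ℝ) : 0 ≤ v ⬝ᵥ S *ᵥ v := by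
    simpa using hS.posSemidef.dotProduct_mulVec_nonneg v
  obtain ⟨l₀, hl₀, hl₀_ne⟩ := hC_ne
  have hB_ne : B.Nonempty := ⟨_, l₀, hl₀, hl₀_ne, rfl⟩
  have hB_bdd : BddAbove B := by
    refine ⟨h ⬝ᵥ S *ᵥ h, ?_⟩
    rintro _ ⟨l, hl, hl_ne, rfl⟩
    obtain ⟨t, -, ht⟩ := (ray l hl hl_ne).1
    linarith [hQ_nonneg (h - t • l)]
  have hB_nonneg : 0 ≤ sSup B :=
    le_csSup_of_le hB_bdd ⟨l₀, hl₀, hl₀_ne, rfl⟩ (div_nonneg (sq_nonneg _) (hQ_nonneg l₀))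
  have hGLB : IsGLB {y : ℝ | ∃ l ∈ C, y = (h - l) ⬝ᵥ S *ᵥ (h - l)}
      (h ⬝ᵥ S *ᵥ h - sSup B) := by
    constructor
    · rintro _ ⟨l, hl, rfl⟩
      by_cases hl_ne : l = 0
      · simpa [hl_ne] using hB_nonneg
      · have h_ray := (ray l hl hl_ne).2 ⟨1, Set.mem_Ici.2 zero_le_one, rfl⟩
        simp only [one_smul] at h_ray
        linarith [le_csSup hB_bdd ⟨l, hl, hl_ne, rfl⟩]
    · intro c hc
      suffices sSup B ≤ h ⬝ᵥ S *ᵥ h - c by linarith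
      refine csSup_le hB_ne ?_
      rintro _ ⟨l, hl, hl_ne, rfl⟩
      obtain ⟨t, ht, h_eq⟩ := (ray l hl hl_ne).1
      linarith [hc ⟨t • l, hC l hl t ht, rfl⟩]
  have h0 : (0 : n → ℝ) ∈ C := by simpa using hC l₀ hl₀ 0 le_rfl
  rw [hGLB.csInf_eq ⟨_, 0, h0, rfl⟩]
  ring

end Matrix

theorem stmt8_general {K : ℕ} (hK : 0 < K)
    (S : Matrix (Fin K) (Fin K) ℝ) (hS : S.PosDef)
    (x : Fin K → ℝ) :
    (S⁻¹ *ᵥ x) ⬝ᵥ S *ᵥ (S⁻¹ *ᵥ x)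
      - sInf {y : ℝ | ∃ lam : Fin K → ℝ, (∀ k, 0 ≤ lam k) ∧
          y = ((S⁻¹ *ᵥ x) - lam) ⬝ᵥ S *ᵥ ((S⁻¹ *ᵥ x) - lam)}
      = sSup {y : ℝ | ∃ lam : Fin K → ℝ, (∀ k, 0 ≤ lam k) ∧ lam ≠ 0 ∧
          y = (max 0 (lam ⬝ᵥ x)) ^ 2 / (lam ⬝ᵥ S *ᵥ lam)} := by
  have hsingle : (0 : Fin K → ℝ) ≤ Pi.single ⟨0, hK⟩ 1 := Pi.single_nonneg.2 zero_le_one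
  exact hS.sub_sInf_dotProduct_mulVec_sub_eq_sSup {l | ∀ k, 0 ≤ l k}
    (fun l hl t ht k => mul_nonneg ht (hl k))
    ⟨Pi.single ⟨0, hK⟩ 1, hsingle, Pi.single_ne_zero_iff.2 one_ne_zero⟩ x

/-- Shapiro's duality identity: for a symmetric positive definite
`Σ` and `h = Σ⁻¹ x`, the squared `Σ`-norm of the projection of `h` onto the
nonnegative orthant equals the supremum over coherent combinations `λ ∈ Λ₊` of
`max(0, λᵀ x)² / (λᵀ Σ λ)`. -/
theorem stmt8 {K : ℕ} (hK : 0 < K)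
    (S : Matrix (Fin K) (Fin K) ℝ) (hsymm : S.IsSymm) (hS : S.PosDef)
    (x : Fin K → ℝ) :
    (S⁻¹ *ᵥ x) ⬝ᵥ S *ᵥ (S⁻¹ *ᵥ x)
      - sInf {y : ℝ | ∃ lam : Fin K → ℝ, (∀ k, 0 ≤ lam k) ∧
          y = ((S⁻¹ *ᵥ x) - lam) ⬝ᵥ S *ᵥ ((S⁻¹ *ᵥ x) - lam)}
      = sSup {y : ℝ | ∃ lam : Fin K → ℝ, (∀ k, 0 ≤ lam k) ∧ lam ≠ 0 ∧
          y = (max 0 (lam ⬝ᵥ x)) ^ 2 / (lam ⬝ᵥ S *ᵥ lam)} :=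
  stmt8_general hK S hS x
end

section
/- Fix K ≥ 1 and let Λ₊ = { λ ∈ ℝ^K : λ_k ≥ 0 for all k, λ ≠ 0 }. For each I ∈ ℕ let T_I be a random vector in ℝ^K on a probability space, μ_I ∈ ℝ^K, and Σ_I a K×K symmetric positive definite matrix. Suppose (i) I⁻¹ Σ_I converges to a positive definite matrix M as I → ∞, and (ii) the law of Σ_I^{−1/2}(T_I − μ_I) converges weakly to π, the product of K standard Gaussian measures on ℝ^K. Define A_I = sup_{λ ∈ Λ₊} λᵀ(T_I − μ_I) / (λᵀ Σ_I λ)^{1/2}. Then the law of max(0, A_I)² converges weakly to the pushforward of π under the map w ↦ wᵀ w − inf_{θ ∈ ℝ^K, θ_k ≥ 0 for all k} (M^{−1/2} w − θ)ᵀ M (M^{−1/2} w − θ). (Theorem 1: this limit law is the chi-bar-squared distribution χ̄²(M^{−1}, Λ₊).) -/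
/-!
Write `Σ_I = S_I²` with `S_I = Σ_I^{1/2}` and `W_I = S_I⁻¹ (T_I − μ_I)`. Substituting
`u = S_I λ`, `A_I` is the supremum of `⟪u, W_I⟫ / ‖u‖` over the nonzero points of the closed convex
cone `S_I ℝ₊ᴷ`, so `max(0, A_I)` is the norm of the projection of `W_I` onto this cone and
`max(0, A_I)² = ‖W_I‖² − dist(W_I, S_I ℝ₊ᴷ)²`. The same computation, with `θ = M^{1/2} θ'`,
turns the limit statistic into `‖w‖² − dist(w, M^{1/2} ℝ₊ᴷ)²`.

The cone does not change when `S_I` is replaced by `I^{−1/2} S_I = (Σ_I / I)^{1/2}`, which tends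
to `M^{1/2}` because the matrix square root is continuous. The distance to `B ℝ₊ᴷ` depends
continuously on the invertible matrix `B`, so the statistics converge locally uniformly; by
tightness of `π`, locally uniform convergence passes through the weak convergence of `W_I`.
-/

open Matrix MeasureTheory ProbabilityTheory Filter

/-- The square root of a positive semidefinite matrix, as `Matrix.PosSemidef.sqrt` was defined in
Mathlib of December 2024 (removed since): `U * diagonal (√ ∘ eigenvalues) * U⋆`. -/
noncomputable def Matrix.PosSemidef.sqrt {n : Type*} [Fintype n] [DecidableEq n] {𝕜 : Type*}
    [RCLike 𝕜] [PartialOrder 𝕜] {A : Matrix n n 𝕜} (hA : A.PosSemidef) : Matrix n n 𝕜 :=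
  hA.isHermitian.eigenvectorUnitary.1 * diagonal ((↑) ∘ (√·) ∘ hA.isHermitian.eigenvalues) *
    (star hA.isHermitian.eigenvectorUnitary : Matrix n n 𝕜)

namespace Matrix

variable {n : Type*} [Fintype n]

lemma isClosed_setOf_posSemidef : IsClosed {A : Matrix n n ℝ | A.PosSemidef} := by
  simp_rw [posSemidef_iff_dotProduct_mulVec, Set.ofPred_and, Set.ofPred_forall]
  exact (isClosed_eq continuous_id.matrix_conjTranspose continuous_id).inter <|
    isClosed_iInter fun x => isClosed_le continuous_const <|
      continuous_const.dotProduct (continuous_id.matrix_mulVec continuous_const)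

lemma sq_le_mul_transpose_apply_self (B : Matrix n n ℝ) (i j : n) :
    B i j ^ 2 ≤ (B * Bᵀ) i i := by
  rw [mul_apply]
  simp_rw [transpose_apply, ← sq]
  exact Finset.single_le_sum (fun k _ => sq_nonneg (B i k)) (Finset.mem_univ j)

variable [DecidableEq n]

namespace PosSemidef

open scoped MatrixOrder

variable {A : Matrix n n ℝ}

lemma sqrt_eq_cfcSqrt (hA : A.PosSemidef) : hA.sqrt = CFC.sqrt A := by
  rw [CFC.sqrt_eq_cfc, cfc_nnreal_eq_real _ A hA.nonneg, hA.1.cfc_eq, IsHermitian.cfc,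
    Unitary.conjStarAlgAut_apply, Matrix.PosSemidef.sqrt]
  congr 3
  funext i
  simp [Real.coe_toNNReal', max_eq_left (hA.eigenvalues_nonneg i)]

lemma posSemidef_sqrt (hA : A.PosSemidef) : hA.sqrt.PosSemidef := by
  rw [sqrt_eq_cfcSqrt]
  exact nonneg_iff_posSemidef.mp (CFC.sqrt_nonneg A)

lemma sqrt_mul_self (hA : A.PosSemidef) : hA.sqrt * hA.sqrt = A := by
  rw [sqrt_eq_cfcSqrt]
  exact CFC.sqrt_mul_sqrt_self A hA.nonneg

lemma eq_sqrt_of_mul_self_eq {B : Matrix n n ℝ} (hA : A.PosSemidef) (hB : B.PosSemidef)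
    (h : B * B = A) : B = hA.sqrt := by
  rw [sqrt_eq_cfcSqrt, eq_comm, CFC.sqrt_eq_iff A B hA.nonneg hB.nonneg, h]

lemma transpose_sqrt (hA : A.PosSemidef) : hA.sqrtᵀ = hA.sqrt := by
  simpa using hA.posSemidef_sqrt.isHermitian.eq

lemma sqrt_smul (hA : A.PosSemidef) {c : ℝ} (hc : 0 ≤ c) :
    (hA.smul hc).sqrt = √c • hA.sqrt :=
  (eq_sqrt_of_mul_self_eq _ (hA.posSemidef_sqrt.smul (Real.sqrt_nonneg c))
    (by rw [smul_mul_smul_comm, Real.mul_self_sqrt hc, sqrt_mul_self])).symm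

/-- Since `(√(A i)) j k ^ 2 ≤ A i j j`, the square roots stay in a compact set, and each of their
cluster points is a positive semidefinite square root of `M`. -/
theorem tendsto_sqrt {ι : Type*} {l : Filter ι} {A : ι → Matrix n n ℝ} {M : Matrix n n ℝ}
    (hA : ∀ i, (A i).PosSemidef) (hM : M.PosSemidef) (h : Tendsto A l (nhds M)) :
    Tendsto (fun i => (hA i).sqrt) l (nhds hM.sqrt) := by
  let c : n → ℝ := fun i => √(M i i + 1)
  let box : Set (Matrix n n ℝ) := Set.univ.pi fun i => Set.univ.pi fun _ => Set.Icc (-c i) (c i)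
  have hcompact : IsCompact ({B | B.PosSemidef} ∩ box) :=
    (isCompact_univ_pi fun i => isCompact_univ_pi fun _ => isCompact_Icc).inter_left
      isClosed_setOf_posSemidef
  have hdiag : ∀ᶠ i in l, ∀ j, A i j j < M j j + 1 := eventually_all.2 fun j =>
    ((continuous_id.matrix_elem j j).tendsto M |>.comp h).eventually_lt_const (lt_add_one _)
  have hmem : ∀ᶠ i in l, (hA i).sqrt ∈ {B | B.PosSemidef} ∩ box := by
    filter_upwards [hdiag] with i hi
    refine ⟨(hA i).posSemidef_sqrt, fun j _ k _ => abs_le.mp ?_⟩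
    rw [← Real.sqrt_sq_eq_abs]
    refine Real.sqrt_le_sqrt ((sq_le_mul_transpose_apply_self _ j k).trans ?_)
    rw [(hA i).transpose_sqrt, (hA i).sqrt_mul_self]
    exact (hi j).le
  refine hcompact.tendsto_nhds_of_unique_mapClusterPt hmem fun L hL hcluster => ?_
  refine hM.eq_sqrt_of_mul_self_eq hL.1 ?_
  have hsq : MapClusterPt (L * L) l A := by
    simpa [Function.comp_def, (hA _).sqrt_mul_self] using
      hcluster.continuousAt_comp (continuous_id.mul continuous_id).continuousAt
  by_contra hne
  exact clusterPt_iff_not_disjoint.mp hsq ((disjoint_nhds_nhds.mpr hne).mono_right h)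

end PosSemidef

lemma PosDef.isUnit_det_sqrt {A : Matrix n n ℝ} (hA : A.PosDef) :
    IsUnit hA.posSemidef.sqrt.det := by
  refine isUnit_iff_ne_zero.mpr fun h => hA.det_pos.ne' ?_
  rw [← hA.posSemidef.sqrt_mul_self, det_mul, h, zero_mul]

end Matrix

theorem ContinuousLinearMap.isClosedMap_of_isUnit {R M : Type*} [Semiring R] [TopologicalSpace M]
    [AddCommMonoid M] [Module R M] {A : M →L[R] M} (hA : IsUnit A) : IsClosedMap A :=
  (ContinuousLinearEquiv.unitsEquiv R M hA.unit).toHomeomorph.isClosedMap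

namespace PointedCone

open Metric
open scoped RealInnerProductSpace

variable {E : Type*} [NormedAddCommGroup E] [InnerProductSpace ℝ E] [CompleteSpace E]
  {C : PointedCone ℝ E}

theorem exists_projection (hC : IsClosed (C : Set E)) (w : E) :
    ∃ p ∈ C, ‖w - p‖ = infDist w C ∧ ⟪w - p, p⟫ = 0 ∧ ∀ v ∈ C, ⟪w - p, v⟫ ≤ 0 := by
  obtain ⟨p, hp, hmin⟩ := exists_norm_eq_iInf_of_complete_convex ⟨0, C.zero_mem⟩
    hC.isComplete C.convex w
  have hvar := (norm_eq_iInf_iff_real_inner_le_zero C.convex hp).mp hmin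
  have hnonneg : 0 ≤ ⟪w - p, p⟫ := by
    simpa [inner_neg_right] using hvar 0 C.zero_mem
  have hnonpos : ⟪w - p, p⟫ ≤ 0 := by
    simpa [two_smul] using hvar ((2 : ℝ) • p) (C.smul_mem zero_le_two hp)
  have horth : ⟪w - p, p⟫ = 0 := le_antisymm hnonpos hnonneg
  refine ⟨p, hp, ?_, horth, fun v hv => ?_⟩
  · rw [hmin, infDist_eq_iInf]
    simp only [dist_eq_norm]
  · simpa [inner_sub_right, horth] using hvar v hv

theorem sq_max_sSup_inner_div_norm (hC : IsClosed (C : Set E)) (w : E) :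
    max 0 (sSup ((fun u => ⟪u, w⟫ / ‖u‖) '' ((C : Set E) \ {0}))) ^ 2
      = ‖w‖ ^ 2 - infDist w C ^ 2 := by
  obtain ⟨p, hp, hdist, horth, hpolar⟩ := exists_projection hC w
  set S := (fun u => ⟪u, w⟫ / ‖u‖) '' ((C : Set E) \ {0})
  have hbound : ∀ y ∈ S, y ≤ ‖p‖ := by
    rintro _ ⟨u, ⟨hu, hu0⟩, rfl⟩
    have hsplit : ⟪u, w⟫ = ⟪u, p⟫ + ⟪w - p, u⟫ := by
      rw [real_inner_comm, inner_sub_left, real_inner_comm p u]; ring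
    rw [div_le_iff₀ (norm_pos_iff.mpr hu0), hsplit, mul_comm]
    linarith [real_inner_le_norm u p, hpolar u hu]
  have hmax : max 0 (sSup S) = ‖p‖ := by
    rcases eq_or_ne p 0 with rfl | hp0
    · simpa using Real.sSup_le hbound (norm_nonneg 0)
    · have hpS : ‖p‖ ∈ S := by
        refine ⟨p, ⟨hp, hp0⟩, ?_⟩
        have : ⟪p, w⟫ = ‖p‖ ^ 2 := by
          rw [real_inner_comm, ← sub_add_cancel w p, inner_add_left, horth,
            real_inner_self_eq_norm_sq, zero_add]
        simp only [this, sq, mul_self_div_self]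
      rw [le_antisymm (Real.sSup_le hbound (norm_nonneg p)) (le_csSup ⟨_, hbound⟩ hpS),
        max_eq_right (norm_nonneg p)]
  have hpyth := norm_add_sq_eq_norm_sq_add_norm_sq_real horth
  rw [sub_add_cancel] at hpyth
  rw [hmax, ← hdist]
  nlinarith [hpyth]

theorem infDist_image_le (hC : IsClosed (C : Set E)) (A : E →L[ℝ] E) (w : E) :
    infDist w (A '' C) ≤ infDist w C + ‖A - 1‖ * ‖w‖ := by
  obtain ⟨p, hp, hdist, horth, -⟩ := exists_projection hC w
  have hpyth := norm_add_sq_eq_norm_sq_add_norm_sq_real horth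
  rw [sub_add_cancel] at hpyth
  have hpw : ‖p‖ ≤ ‖w‖ := by nlinarith [norm_nonneg p, norm_nonneg w, norm_nonneg (w - p)]
  calc infDist w (A '' C) ≤ dist w (A p) := infDist_le_dist_of_mem (Set.mem_image_of_mem A hp)
    _ ≤ dist w p + dist p (A p) := dist_triangle _ _ _
    _ = infDist w C + ‖(A - 1) p‖ := by
        rw [dist_eq_norm, hdist, dist_eq_norm']
        rfl
    _ ≤ infDist w C + ‖A - 1‖ * ‖w‖ := by
        grw [(A - 1).le_opNorm p, hpw]

theorem sInf_dist_sq_image (hC : IsClosed (C : Set E)) (w : E) :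
    sInf ((fun u => dist w u ^ 2) '' C) = infDist w C ^ 2 := by
  obtain ⟨p, hp, hdist, -, -⟩ := exists_projection hC w
  refine IsLeast.csInf_eq ⟨⟨p, hp, by simp only [dist_eq_norm, hdist]⟩, ?_⟩
  rintro _ ⟨u, hu, rfl⟩
  exact pow_le_pow_left₀ infDist_nonneg (infDist_le_dist_of_mem hu) 2

theorem infDist_image_le_of_isUnit (hC : IsClosed (C : Set E)) {A : E →L[ℝ] E} (hA : IsUnit A)
    (A' : E →L[ℝ] E) (w : E) :
    infDist w (A' '' C) ≤ infDist w (A '' C) + ‖A' * Ring.inverse A - 1‖ * ‖w‖ := by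
  have himage : (A' * Ring.inverse A) '' (A '' C) = A' '' C := by
    rw [Set.image_image]
    exact Set.image_congr fun x _ =>
      congrArg A' (DFunLike.congr_fun (Ring.inverse_mul_cancel A hA) x)
  have hclosed : IsClosed ((C.map (A : E →ₗ[ℝ] E) : PointedCone ℝ E) : Set E) := by
    rw [coe_map]; exact ContinuousLinearMap.isClosedMap_of_isUnit hA _ hC
  have h := infDist_image_le hclosed (A' * Ring.inverse A) w
  rwa [coe_map, ContinuousLinearMap.coe_coe, himage] at h

theorem continuousOn_infDist_image (hC : IsClosed (C : Set E)) :
    ContinuousOn (fun q : (E →L[ℝ] E) × E => infDist q.2 (q.1 '' C))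
      ({A | IsUnit A} ×ˢ Set.univ) := by
  rintro ⟨A₀, w₀⟩ ⟨hA₀, -⟩
  set bound : (E →L[ℝ] E) × E → ℝ := fun q =>
    dist q.2 w₀ + (‖q.1 * Ring.inverse A₀ - 1‖ + ‖A₀ * Ring.inverse q.1 - 1‖) * ‖q.2‖
  have hbound : ∀ q ∈ {A : E →L[ℝ] E | IsUnit A} ×ˢ (Set.univ : Set E),
      ‖infDist q.2 (q.1 '' C) - infDist w₀ (A₀ '' C)‖ ≤ bound q := by
    rintro ⟨A, w⟩ ⟨hA, -⟩
    have h₁ := infDist_image_le_of_isUnit hC hA₀ A w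
    have h₂ := infDist_image_le_of_isUnit hC hA A₀ w
    have h₃ := infDist_le_infDist_add_dist (x := w) (y := w₀) (s := A₀ '' C)
    have h₄ := infDist_le_infDist_add_dist (x := w₀) (y := w) (s := A₀ '' C)
    rw [dist_comm] at h₄
    simp only [bound, Real.norm_eq_abs, abs_sub_le_iff]
    constructor <;> nlinarith [norm_nonneg w, norm_nonneg (A * Ring.inverse A₀ - 1),
      norm_nonneg (A₀ * Ring.inverse A - 1)]
  have hcont : ContinuousAt bound (A₀, w₀) := by
    have hinv₀ : ContinuousAt Ring.inverse A₀ := by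
      simpa using NormedRing.inverse_continuousAt hA₀.unit
    have hinv := hinv₀.comp (x := (A₀, w₀)) continuousAt_fst
    exact (continuous_snd.dist continuous_const).continuousAt.add
      ((((continuous_fst.mul continuous_const).sub continuous_const).norm.continuousAt.add
        ((continuousAt_const.mul hinv).sub continuousAt_const).norm).mul
        continuous_snd.norm.continuousAt)
  have hzero : bound (A₀, w₀) = 0 := by
    simp [bound, Ring.mul_inverse_cancel A₀ hA₀]
  refine tendsto_iff_norm_sub_tendsto_zero.mpr <| squeeze_zero'
    (Eventually.of_forall fun _ => norm_nonneg _) (eventually_nhdsWithin_of_forall hbound) ?_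
  exact hzero ▸ hcont.tendsto.mono_left nhdsWithin_le_nhds

end PointedCone

section MatrixCone

open Metric WithLp
open scoped RealInnerProductSpace

noncomputable def orthant (n : Type*) : PointedCone ℝ (EuclideanSpace ℝ n) :=
  (PointedCone.positive ℝ (n → ℝ)).comap (EuclideanSpace.equiv n ℝ).toLinearMap

lemma mem_orthant {n : Type*} {u : EuclideanSpace ℝ n} : u ∈ orthant n ↔ ∀ k, 0 ≤ u k := by
  simp [orthant, PointedCone.mem_comap, Pi.le_def]

lemma isClosed_orthant {n : Type*} : IsClosed (orthant n : Set (EuclideanSpace ℝ n)) :=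
  isClosed_Ici.preimage (EuclideanSpace.equiv n ℝ).continuous

variable {n : Type*} [Fintype n]

lemma inner_toLp_mulVec {S : Matrix n n ℝ} (hS : Sᵀ = S) (u v : n → ℝ) :
    ⟪toLp 2 (S *ᵥ u), toLp 2 v⟫ = u ⬝ᵥ S *ᵥ v := by
  rw [EuclideanSpace.inner_toLp_toLp, star_trivial, dotProduct_comm, dotProduct_mulVec,
    ← hS, vecMul_transpose, hS]

lemma norm_toLp_mulVec_sq {S : Matrix n n ℝ} (hS : Sᵀ = S) (u : n → ℝ) :
    ‖toLp 2 (S *ᵥ u)‖ ^ 2 = u ⬝ᵥ (S * S) *ᵥ u := by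
  rw [← real_inner_self_eq_norm_sq, inner_toLp_mulVec hS, mulVec_mulVec]

variable [DecidableEq n]

lemma Matrix.continuous_toEuclideanCLM : Continuous (toEuclideanCLM (𝕜 := ℝ) (n := n)) :=
  LinearMap.continuous_of_finiteDimensional
    (toEuclideanCLM (𝕜 := ℝ) (n := n)).toAlgEquiv.toLinearMap

noncomputable def matrixCone (B : Matrix n n ℝ) : PointedCone ℝ (EuclideanSpace ℝ n) :=
  (orthant n).map (toEuclideanLin B)

lemma coe_matrixCone (B : Matrix n n ℝ) :
    (matrixCone B : Set (EuclideanSpace ℝ n)) = toEuclideanCLM (𝕜 := ℝ) B '' orthant n :=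
  PointedCone.coe_map _ _

lemma isClosed_matrixCone {B : Matrix n n ℝ} (hB : IsUnit B.det) :
    IsClosed (matrixCone B : Set (EuclideanSpace ℝ n)) := by
  rw [coe_matrixCone]
  exact ContinuousLinearMap.isClosedMap_of_isUnit
    ((isUnit_iff_isUnit_det B).mpr hB |>.map _) _ isClosed_orthant

lemma matrixCone_smul (B : Matrix n n ℝ) {c : ℝ} (hc : 0 < c) :
    matrixCone (c • B) = matrixCone B := by
  refine SetLike.coe_injective ?_
  simp only [coe_matrixCone]
  ext u
  constructor
  · rintro ⟨θ, hθ, rfl⟩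
    exact ⟨c • θ, (orthant n).smul_mem hc.le hθ, by simp⟩
  · rintro ⟨θ, hθ, rfl⟩
    refine ⟨c⁻¹ • θ, (orthant n).smul_mem (inv_nonneg.mpr hc.le) hθ, ?_⟩
    simp [smul_smul, hc.ne']

/-- `chiBarStat B (B *ᵥ X) = Xᵀ V⁻¹ X - inf_{θ ≥ 0} (X - θ)ᵀ V⁻¹ (X - θ)` for `V⁻¹ = Bᵀ B`: the
chi-bar-squared statistic, in coordinates where `V` becomes the identity. -/
noncomputable def chiBarStat (B : Matrix n n ℝ) : C(n → ℝ, ℝ) where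
  toFun v := ‖toLp 2 v‖ ^ 2 - infDist (toLp 2 v) (matrixCone B) ^ 2
  continuous_toFun := by
    have := (EuclideanSpace.equiv n ℝ).symm.continuous
    fun_prop

lemma chiBarStat_apply (B : Matrix n n ℝ) (v : n → ℝ) :
    chiBarStat B v = ‖toLp 2 v‖ ^ 2 - infDist (toLp 2 v) (matrixCone B) ^ 2 :=
  rfl

theorem chiBarStat_smul (B : Matrix n n ℝ) {c : ℝ} (hc : 0 < c) :
    chiBarStat (c • B) = chiBarStat B := by
  ext v
  simp only [chiBarStat_apply, matrixCone_smul B hc]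

theorem continuousAt_chiBarStat {R : Matrix n n ℝ} (hR : IsUnit R.det) :
    ContinuousAt chiBarStat R := by
  have hopen : IsOpen {B : Matrix n n ℝ | IsUnit B.det} := by
    simp only [isUnit_iff_ne_zero]
    exact isOpen_ne_fun (continuous_id.matrix_det) continuous_const
  refine (ContinuousMap.continuousOn_of_continuousOn_uncurry _ ?_).continuousAt
    (hopen.mem_nhds hR)
  have := (EuclideanSpace.equiv n ℝ).symm.continuous
  have := continuous_toEuclideanCLM (n := n)
  have hpair : Continuous fun q : Matrix n n ℝ × (n → ℝ) =>
      (toEuclideanCLM (𝕜 := ℝ) q.1, toLp 2 q.2) := by fun_prop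
  have hinfDist := (PointedCone.continuousOn_infDist_image (isClosed_orthant (n := n))).comp
    (s := {B : Matrix n n ℝ | IsUnit B.det} ×ˢ Set.univ) hpair.continuousOn
    fun q hq => ⟨((isUnit_iff_isUnit_det _).mpr hq.1).map _, trivial⟩
  have hnorm : Continuous fun q : Matrix n n ℝ × (n → ℝ) => ‖toLp 2 q.2‖ ^ 2 := by fun_prop
  simp only [Function.uncurry_def, chiBarStat_apply, coe_matrixCone]
  exact hnorm.continuousOn.sub (hinfDist.pow 2)

theorem sq_max_sSup_eq_chiBarStat {S A : Matrix n n ℝ} (hS : Sᵀ = S) (hdet : IsUnit S.det)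
    (hSA : S * S = A) (x : n → ℝ) :
    max 0 (sSup {y : ℝ | ∃ lam : n → ℝ, (∀ k, 0 ≤ lam k) ∧ lam ≠ 0 ∧
      y = lam ⬝ᵥ x / √(lam ⬝ᵥ A *ᵥ lam)}) ^ 2 = chiBarStat S (S⁻¹ *ᵥ x) := by
  subst hSA
  have hval (lam : n → ℝ) : lam ⬝ᵥ x / √(lam ⬝ᵥ (S * S) *ᵥ lam)
      = ⟪toLp 2 (S *ᵥ lam), toLp 2 (S⁻¹ *ᵥ x)⟫ / ‖toLp 2 (S *ᵥ lam)‖ := by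
    rw [inner_toLp_mulVec hS, mulVec_mulVec, mul_nonsing_inv S hdet, one_mulVec,
      ← norm_toLp_mulVec_sq hS, Real.sqrt_sq (norm_nonneg _)]
  have hinj : Function.Injective S.mulVec :=
    mulVec_injective_iff_isUnit.mpr ((isUnit_iff_isUnit_det S).mpr hdet)
  have hset : {y : ℝ | ∃ lam : n → ℝ, (∀ k, 0 ≤ lam k) ∧ lam ≠ 0 ∧
      y = lam ⬝ᵥ x / √(lam ⬝ᵥ (S * S) *ᵥ lam)}
      = (fun u => ⟪u, toLp 2 (S⁻¹ *ᵥ x)⟫ / ‖u‖) '' ((matrixCone S : Set _) \ {0}) := by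
    ext y
    simp only [coe_matrixCone, Set.mem_ofPred_eq, Set.mem_image, Set.mem_sdiff,
      Set.mem_singleton_iff]
    constructor
    · rintro ⟨lam, hlam, hne, rfl⟩
      refine ⟨toLp 2 (S *ᵥ lam), ⟨⟨toLp 2 lam, mem_orthant.mpr hlam, rfl⟩, ?_⟩, (hval lam).symm⟩
      simpa using hinj.ne hne
    · rintro ⟨_, ⟨⟨θ, hθ, rfl⟩, hne⟩, rfl⟩
      refine ⟨ofLp θ, mem_orthant.mp hθ, fun h => hne ?_, (hval _).symm⟩
      rw [← toLp_ofLp 2 θ, h]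
      simp
  rw [hset, PointedCone.sq_max_sSup_inner_div_norm (isClosed_matrixCone hdet), chiBarStat_apply]

theorem sub_sInf_eq_chiBarStat {R M : Matrix n n ℝ} (hR : Rᵀ = R) (hdet : IsUnit R.det)
    (hRM : R * R = M) (w : n → ℝ) :
    w ⬝ᵥ w - sInf {y : ℝ | ∃ θ : n → ℝ, (∀ k, 0 ≤ θ k) ∧
      y = (R⁻¹ *ᵥ w - θ) ⬝ᵥ M *ᵥ (R⁻¹ *ᵥ w - θ)} = chiBarStat R w := by
  have hval (θ : n → ℝ) : (R⁻¹ *ᵥ w - θ) ⬝ᵥ M *ᵥ (R⁻¹ *ᵥ w - θ)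
      = dist (toLp 2 w) (toEuclideanCLM (𝕜 := ℝ) R (toLp 2 θ)) ^ 2 := by
    rw [← hRM, ← norm_toLp_mulVec_sq hR, mulVec_sub, mulVec_mulVec, mul_nonsing_inv R hdet,
      one_mulVec, toEuclideanCLM_toLp, dist_eq_norm, ← toLp_sub]
  have hset : {y : ℝ | ∃ θ : n → ℝ, (∀ k, 0 ≤ θ k) ∧
      y = (R⁻¹ *ᵥ w - θ) ⬝ᵥ M *ᵥ (R⁻¹ *ᵥ w - θ)}
      = (fun u => dist (toLp 2 w) u ^ 2) '' (matrixCone R : Set _) := by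
    rw [coe_matrixCone]
    ext y
    constructor
    · rintro ⟨θ, hθ, rfl⟩
      exact ⟨_, ⟨toLp 2 θ, mem_orthant.mpr hθ, rfl⟩, (hval θ).symm⟩
    · rintro ⟨_, ⟨θ, hθ, rfl⟩, rfl⟩
      exact ⟨ofLp θ, mem_orthant.mp hθ, (hval (ofLp θ)).symm⟩
  rw [hset, PointedCone.sInf_dist_sq_image (isClosed_matrixCone hdet), chiBarStat_apply,
    ← real_inner_self_eq_norm_sq]
  rfl

end MatrixCone

section WeakConvergence

open BoundedContinuousFunction Topology

variable {ι : Type*} {l : Filter ι} {Ω : ι → Type*} [∀ i, MeasurableSpace (Ω i)]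
  {P : ∀ i, Measure (Ω i)}
  {E : Type*} [TopologicalSpace E] [MeasurableSpace E] {W : ∀ i, Ω i → E}
  {π : Measure E} [IsProbabilityMeasure π]

lemma BoundedContinuousFunction.integrable_comp [OpensMeasurableSpace E] {α : Type*}
    [MeasurableSpace α] {μ : Measure α} [IsFiniteMeasure μ] (g : E →ᵇ ℝ) {X : α → E}
    (hX : AEMeasurable X μ) :
    Integrable (fun a => g (X a)) μ :=
  (g.integrable (μ.map X)).comp_aemeasurable hX

/-- Since `∫` of a non-measurable function is `0`, the integrals of `h ∘ W i` and of
`(h + 1) ∘ W i` could not differ by `1` in the limit otherwise. -/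
theorem eventually_aestronglyMeasurable_of_tendsto_integral [OpensMeasurableSpace E]
    (hweak : ∀ g : E →ᵇ ℝ, Tendsto (fun i => ∫ ω, g (W i ω) ∂P i) l (𝓝 (∫ w, g w ∂π)))
    (h : E →ᵇ ℝ) : ∀ᶠ i in l, AEStronglyMeasurable (fun ω => h (W i ω)) (P i) := by
  have hone : ∫ w, (h + 1) w ∂π - ∫ w, h w ∂π = 1 := by
    simp [integral_add (h.integrable π) (integrable_const _)]
  have hlim := hone ▸ (hweak (h + 1)).sub (hweak h)
  filter_upwards [hlim.eventually_ne one_ne_zero] with i hi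
  by_contra hnm
  have hnm' : ¬ AEStronglyMeasurable (fun ω => (h + 1) (W i ω)) (P i) := fun hm =>
    hnm <| (hm.sub (aestronglyMeasurable_const (b := (1 : ℝ)))).congr <|
      Eventually.of_forall fun ω => by simp
  exact hi (by rw [integral_undef fun hint => hnm' hint.1, integral_undef fun hint => hnm hint.1,
    sub_zero])

theorem eventually_aemeasurable_of_tendsto_integral {κ : Type*} [Finite κ]
    {W : ∀ i, Ω i → κ → ℝ} {π : Measure (κ → ℝ)} [IsProbabilityMeasure π]
    (hweak : ∀ g : (κ → ℝ) →ᵇ ℝ,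
      Tendsto (fun i => ∫ ω, g (W i ω) ∂P i) l (𝓝 (∫ w, g w ∂π))) :
    ∀ᶠ i in l, AEMeasurable (W i) (P i) := by
  let arctanCoord (k : κ) : (κ → ℝ) →ᵇ ℝ :=
    ofNormedAddCommGroup (fun v => Real.arctan (v k)) (by fun_prop) (Real.pi / 2) fun v =>
      abs_le.mpr ⟨(Real.neg_pi_div_two_lt_arctan _).le, (Real.arctan_lt_pi_div_two _).le⟩
  filter_upwards [eventually_all.mpr fun k =>
    eventually_aestronglyMeasurable_of_tendsto_integral hweak (arctanCoord k)] with i hi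
  refine aemeasurable_pi_lambda _ fun k => ?_
  have htan : Measurable Real.tan := by
    rw [funext Real.tan_eq_sin_div_cos]
    exact Real.measurable_sin.div Real.measurable_cos
  simpa [arctanCoord, Function.comp_def, Real.tan_arctan] using
    htan.comp_aemeasurable (hi k).aemeasurable

variable [∀ i, IsProbabilityMeasure (P i)] [T2Space E] [LocallyCompactSpace E]
  [OpensMeasurableSpace E]

theorem MeasureTheory.IsTightMeasureSet.exists_cutoff (hπ : IsTightMeasureSet {π}) {δ : ℝ}
    (hδ : 0 < δ) :
    ∃ (φ : E →ᵇ ℝ) (K : Set E), IsCompact K ∧ (∀ x, 0 ≤ φ x) ∧ (∀ x ∉ K, φ x = 1) ∧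
      ∫ w, φ w ∂π ≤ δ := by
  obtain ⟨L, hL, hLπ⟩ := isTightMeasureSet_iff_exists_isCompact_measure_compl_le.mp hπ
    (ENNReal.ofReal δ) (ENNReal.ofReal_pos.mpr hδ)
  obtain ⟨f, hf₁, -, hfsupp, hf01⟩ :=
    exists_continuous_one_zero_of_isCompact hL isClosed_empty (Set.disjoint_empty L)
  let φ : E →ᵇ ℝ := ofNormedAddCommGroup (fun x => 1 - f x) (by fun_prop) 1 fun x => by
    have := hf01 x; rw [Real.norm_eq_abs, abs_le]; constructor <;> linarith [this.1, this.2]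
  have hle (x : E) : φ x ≤ Lᶜ.indicator 1 x := by
    by_cases hx : x ∈ L
    · simp [φ, hx, hf₁ hx]
    · simpa [φ, hx] using (hf01 x).1
  refine ⟨φ, tsupport f, hfsupp, fun x => sub_nonneg.mpr (hf01 x).2,
    fun x hx => by simp [φ, image_eq_zero_of_notMem_tsupport hx], ?_⟩
  calc ∫ w, φ w ∂π ≤ ∫ w, Lᶜ.indicator 1 w ∂π :=
        integral_mono (φ.integrable π) ((integrable_const 1).indicator
          hL.isClosed.measurableSet.compl) hle
    _ = π.real Lᶜ := integral_indicator_one hL.isClosed.measurableSet.compl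
    _ ≤ δ := ENNReal.toReal_le_of_le_ofReal hδ.le (hLπ π rfl)

theorem tendsto_integral_sub_of_tendstoLocallyUniformly
    (hW : ∀ᶠ i in l, AEMeasurable (W i) (P i)) (hπ : IsTightMeasureSet {π})
    (hweak : ∀ g : E →ᵇ ℝ, Tendsto (fun i => ∫ ω, g (W i ω) ∂P i) l (𝓝 (∫ w, g w ∂π)))
    {G : ι → E →ᵇ ℝ} {G₀ : E →ᵇ ℝ} {c : ℝ} (hc : ∀ i, ‖G i - G₀‖ ≤ c)
    (hG : TendstoLocallyUniformly (fun i => ⇑(G i)) G₀ l) :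
    Tendsto (fun i => ∫ ω, G i (W i ω) ∂P i - ∫ ω, G₀ (W i ω) ∂P i) l (𝓝 0) := by
  rcases isEmpty_or_nonempty ι with hι | ⟨⟨i₀⟩⟩
  · exact tendsto_of_isEmpty
  have hc₀ : 0 ≤ c := (norm_nonneg _).trans (hc i₀)
  refine Metric.tendsto_nhds.mpr fun ε hε => ?_
  set δ := ε / (2 * (1 + 2 * c))
  have hδ : 0 < δ := by positivity
  obtain ⟨φ, K, hK, hφ₀, hφ₁, hφπ⟩ := hπ.exists_cutoff hδ
  have hφW : ∀ᶠ i in l, ∫ ω, φ (W i ω) ∂P i < 2 * δ :=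
    (hweak φ).eventually_lt_const (by linarith)
  have hunif : ∀ᶠ i in l, ∀ x ∈ K, dist (G₀ x) (G i x) < δ :=
    Metric.tendstoUniformlyOn_iff.mp (tendstoLocallyUniformly_iff_forall_isCompact.mp hG K hK)
      δ hδ
  filter_upwards [hW, hφW, hunif] with i hmeas hφi hunif
  have hpt (x : E) : |G i x - G₀ x| ≤ δ + c * φ x := by
    by_cases hx : x ∈ K
    · have := hunif x hx
      rw [dist_comm, Real.dist_eq] at this
      nlinarith [hφ₀ x]
    · have := (G i - G₀).norm_coe_le_norm x
      rw [coe_sub, Pi.sub_apply, Real.norm_eq_abs] at this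
      rw [hφ₁ x hx, mul_one]
      linarith [hc i]
  have hint (g : E →ᵇ ℝ) : Integrable (fun ω => g (W i ω)) (P i) := g.integrable_comp hmeas
  rw [dist_zero_right, ← integral_sub (hint _) (hint _), Real.norm_eq_abs]
  calc |∫ ω, G i (W i ω) - G₀ (W i ω) ∂P i|
      ≤ ∫ ω, δ + c * φ (W i ω) ∂P i :=
        abs_integral_le_integral_abs.trans (integral_mono ((hint _).sub (hint _)).abs
          ((integrable_const δ).add ((hint φ).const_mul c)) fun ω => hpt _)
    _ = δ + c * ∫ ω, φ (W i ω) ∂P i := by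
        rw [integral_add (integrable_const δ) ((hint φ).const_mul c), integral_const_mul]
        simp
    _ ≤ δ + c * (2 * δ) := by gcongr
    _ < ε := by
        have : δ * (1 + 2 * c) = ε / 2 := by
          simp only [δ]; field_simp
        nlinarith

theorem tendsto_integral_comp_of_tendsto {Y : Type*} [TopologicalSpace Y]
    (hW : ∀ᶠ i in l, AEMeasurable (W i) (P i)) (hπ : IsTightMeasureSet {π})
    (hweak : ∀ g : E →ᵇ ℝ, Tendsto (fun i => ∫ ω, g (W i ω) ∂P i) l (𝓝 (∫ w, g w ∂π)))
    {F : ι → C(E, Y)} {F₀ : C(E, Y)} (hF : Tendsto F l (𝓝 F₀)) (g : Y →ᵇ ℝ) :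
    Tendsto (fun i => ∫ ω, g (F i (W i ω)) ∂P i) l (𝓝 (∫ w, g (F₀ w) ∂π)) := by
  have hloc : TendstoLocallyUniformly (fun i => ⇑(g.compContinuous (F i)))
      (g.compContinuous F₀) l :=
    ContinuousMap.tendsto_iff_tendstoLocallyUniformly.mp
      (((ContinuousMap.continuous_postcomp ⟨g, g.continuous⟩).tendsto F₀).comp hF)
  have hbound (i : ι) : ‖g.compContinuous (F i) - g.compContinuous F₀‖ ≤ 2 * ‖g‖ :=
    (norm_sub_le _ _).trans
      (by linarith [norm_compContinuous_le g (F i), norm_compContinuous_le g F₀])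
  simpa using (tendsto_integral_sub_of_tendstoLocallyUniformly hW hπ hweak hbound hloc).add
    (hweak (g.compContinuous F₀))

end WeakConvergence

theorem stmt10_general {K : ℕ}
    (Ω : ℕ → Type) [∀ I, MeasurableSpace (Ω I)]
    (P : (I : ℕ) → MeasureTheory.Measure (Ω I))
    [∀ I, IsProbabilityMeasure (P I)]
    (T : (I : ℕ) → Ω I → (Fin K → ℝ))
    (μ : ℕ → (Fin K → ℝ))
    (Sig : ℕ → Matrix (Fin K) (Fin K) ℝ)
    (hSig : ∀ I, (Sig I).PosDef)
    (M : Matrix (Fin K) (Fin K) ℝ) (hM : M.PosDef)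
    (hconv : Tendsto (fun I : ℕ => ((I : ℝ))⁻¹ • Sig I) atTop (nhds M))
    (π : MeasureTheory.Measure (Fin K → ℝ))
    (hπ : π = MeasureTheory.Measure.pi (fun _ : Fin K => gaussianReal 0 1))
    (hweak : ∀ g : BoundedContinuousFunction (Fin K → ℝ) ℝ,
      Tendsto
        (fun I => ∫ ω, g ((((hSig I).posSemidef.sqrt)⁻¹) *ᵥ (T I ω - μ I)) ∂(P I))
        atTop (nhds (∫ w, g w ∂π))) :
    ∀ g : BoundedContinuousFunction ℝ ℝ,
      Tendsto
        (fun I => ∫ ω, g ((max 0 (sSup {y : ℝ | ∃ lam : Fin K → ℝ,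
            (∀ k, 0 ≤ lam k) ∧ lam ≠ 0 ∧
            y = lam ⬝ᵥ (T I ω - μ I) / Real.sqrt (lam ⬝ᵥ (Sig I) *ᵥ lam)})) ^ 2) ∂(P I))
        atTop
        (nhds (∫ w, g (w ⬝ᵥ w - sInf {y : ℝ | ∃ θ : Fin K → ℝ, (∀ k, 0 ≤ θ k) ∧
          y = (((hM.posSemidef.sqrt)⁻¹ *ᵥ w) - θ) ⬝ᵥ M *ᵥ (((hM.posSemidef.sqrt)⁻¹ *ᵥ w) - θ)}) ∂π)) := by
  intro g
  have : IsProbabilityMeasure π := hπ ▸ inferInstance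
  have hscaled (I : ℕ) : ((I : ℝ)⁻¹ • Sig I).PosSemidef :=
    (hSig I).posSemidef.smul (inv_nonneg.mpr I.cast_nonneg)
  have hsqrt := Matrix.PosSemidef.tendsto_sqrt hscaled hM.posSemidef hconv
  have hlim := tendsto_integral_comp_of_tendsto (eventually_aemeasurable_of_tendsto_integral hweak)
    isTightMeasureSet_singleton hweak
    ((continuousAt_chiBarStat hM.isUnit_det_sqrt).tendsto.comp hsqrt) g
  convert hlim.congr' ?_ using 3
  · funext w
    exact congrArg g (sub_sInf_eq_chiBarStat hM.posSemidef.transpose_sqrt hM.isUnit_det_sqrt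
      hM.posSemidef.sqrt_mul_self w)
  · filter_upwards [eventually_gt_atTop 0] with I hI
    refine integral_congr_ae (Eventually.of_forall fun ω => congrArg g ?_)
    rw [Function.comp_apply, (hSig I).posSemidef.sqrt_smul (inv_nonneg.mpr I.cast_nonneg),
      chiBarStat_smul _ (Real.sqrt_pos.mpr (inv_pos.mpr (Nat.cast_pos.mpr hI)))]
    exact (sq_max_sSup_eq_chiBarStat (hSig I).posSemidef.transpose_sqrt (hSig I).isUnit_det_sqrt
      (hSig I).posSemidef.sqrt_mul_self _).symm

/-- Theorem 1: under (i) `I⁻¹ Σ_I → M` positive definite and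
(ii) weak convergence of `Σ_I^{−1/2}(T_I − μ_I)` to the product `π` of `K`
standard Gaussians, the statistic `max(0, A_I)²`, where
`A_I = sup_{λ ∈ Λ₊} λᵀ(T_I − μ_I)/(λᵀ Σ_I λ)^{1/2}`, converges weakly to the
pushforward of `π` under
`w ↦ wᵀw − inf_{θ ≥ 0} (M^{−1/2} w − θ)ᵀ M (M^{−1/2} w − θ)`,
i.e. to the chi-bar-squared distribution `χ̄²(M⁻¹, Λ₊)`.  Weak convergence is
expressed by convergence of integrals of bounded continuous functions. -/
theorem stmt10 {K : ℕ} (hK : 0 < K)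
    (Ω : ℕ → Type) [∀ I, MeasurableSpace (Ω I)]
    (P : (I : ℕ) → MeasureTheory.Measure (Ω I))
    [∀ I, IsProbabilityMeasure (P I)]
    (T : (I : ℕ) → Ω I → (Fin K → ℝ))
    (μ : ℕ → (Fin K → ℝ))
    (Sig : ℕ → Matrix (Fin K) (Fin K) ℝ)
    (hSigSymm : ∀ I, (Sig I).IsSymm) (hSig : ∀ I, (Sig I).PosDef)
    (M : Matrix (Fin K) (Fin K) ℝ) (hM : M.PosDef)
    (hconv : Tendsto (fun I : ℕ => ((I : ℝ))⁻¹ • Sig I) atTop (nhds M))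
    (π : MeasureTheory.Measure (Fin K → ℝ))
    (hπ : π = MeasureTheory.Measure.pi (fun _ : Fin K => gaussianReal 0 1))
    (hweak : ∀ g : BoundedContinuousFunction (Fin K → ℝ) ℝ,
      Tendsto
        (fun I => ∫ ω, g ((((hSig I).posSemidef.sqrt)⁻¹) *ᵥ (T I ω - μ I)) ∂(P I))
        atTop (nhds (∫ w, g w ∂π))) :
    ∀ g : BoundedContinuousFunction ℝ ℝ,
      Tendsto
        (fun I => ∫ ω, g ((max 0 (sSup {y : ℝ | ∃ lam : Fin K → ℝ,
            (∀ k, 0 ≤ lam k) ∧ lam ≠ 0 ∧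
            y = lam ⬝ᵥ (T I ω - μ I) / Real.sqrt (lam ⬝ᵥ (Sig I) *ᵥ lam)})) ^ 2) ∂(P I))
        atTop
        (nhds (∫ w, g (w ⬝ᵥ w - sInf {y : ℝ | ∃ θ : Fin K → ℝ, (∀ k, 0 ≤ θ k) ∧
          y = (((hM.posSemidef.sqrt)⁻¹ *ᵥ w) - θ) ⬝ᵥ M *ᵥ (((hM.posSemidef.sqrt)⁻¹ *ᵥ w) - θ)}) ∂π)) :=
  stmt10_general Ω P T μ Sig hSig M hM hconv π hπ hweak
end

section
/- Let Ω be a nonempty finite set, p : Ω → [0,1] with Σ_{b ∈ Ω} p(b) = 1, let D be a set, R : Ω → D an observation map, A : Ω × D → ℝ a statistic, and α ∈ (0,1). For d ∈ D define G(v, d) = Σ_{b ∈ Ω : A(b, d) ≤ v} p(b) and q(d) = inf{ v ∈ ℝ : G(v, d) ≥ 1 − α }. Suppose there exists r_C ∈ D such that for all z, b ∈ Ω: A(z, R(z)) ≤ A(z, r_C) and A(b, R(z)) ≥ A(b, r_C). Then Σ_{z ∈ Ω : A(z, R(z)) > q(R(z))} p(z) ≤ α. -/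
open Finset

/-- Proposition 2, Type I error control of the randomization
test for the composite null: with reference distribution
`G(v, d) = Σ_{b : A(b,d) ≤ v} p(b)` and quantile
`q(d) = inf{ v : G(v, d) ≥ 1 − α }`, if there is a sharp-null configuration
`r_C` with `A(z, R(z)) ≤ A(z, r_C)` and `A(b, R(z)) ≥ A(b, r_C)` for all
`z, b`, then the rejection probability is at most `α`. -/
theorem stmt17 {Ω : Type*} [Fintype Ω] [Nonempty Ω] {D : Type*}
    (p : Ω → ℝ) (hp0 : ∀ b, 0 ≤ p b) (hp1 : ∀ b, p b ≤ 1)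
    (hsum : ∑ b, p b = 1)
    (R : Ω → D) (A : Ω → D → ℝ) (α : ℝ) (hα0 : 0 < α) (hα1 : α < 1)
    (rC : D)
    (h1 : ∀ z, A z (R z) ≤ A z rC)
    (h2 : ∀ z b, A b rC ≤ A b (R z)) :
    ∑ z ∈ Finset.univ.filter (fun z =>
        A z (R z) > sInf {v : ℝ |
          1 - α ≤ ∑ b ∈ Finset.univ.filter (fun b => A b (R z) ≤ v), p b}),
      p z ≤ α := by
  set G : D → ℝ → ℝ := fun d v => ∑ b ∈ Finset.univ.filter (fun b => A b d ≤ v), p b with hG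
  set S : D → Set ℝ := fun d => {v : ℝ | 1 - α ≤ G d v} with hS
  have hαpos : (0:ℝ) < 1 - α := by linarith
  -- G is monotone in v (set inclusion of filters)
  have hGmono : ∀ d v w, v ≤ w → G d v ≤ G d w := by
    intro d v w hvw
    apply Finset.sum_le_sum_of_subset_of_nonneg
    · intro b hb
      simp only [Finset.mem_filter, Finset.mem_univ, true_and] at hb ⊢
      exact hb.trans hvw
    · intro b _ _; exact hp0 b
  -- each S d is nonempty
  have hSne : ∀ d, (S d).Nonempty := by
    intro d
    refine ⟨(Finset.univ : Finset Ω).sup' Finset.univ_nonempty (fun b => A b d), ?_⟩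
    simp only [hS, Set.mem_setOf_eq, hG]
    have : (Finset.univ : Finset Ω).filter (fun b => A b d ≤
        (Finset.univ : Finset Ω).sup' Finset.univ_nonempty (fun b => A b d)) = Finset.univ := by
      apply Finset.filter_true_of_mem
      intro b _
      exact Finset.le_sup' (fun b => A b d) (Finset.mem_univ b)
    rw [this, hsum]; linarith
  -- membership in S d forces the filter nonempty
  have hmem_wit : ∀ d v, v ∈ S d → ∃ b, A b d ≤ v := by
    intro d v hv
    by_contra h
    push_neg at h
    have : (Finset.univ : Finset Ω).filter (fun b => A b d ≤ v) = ∅ := by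
      apply Finset.filter_false_of_mem
      intro b _
      exact not_le_of_gt (h b)
    simp only [hS, Set.mem_setOf_eq, hG, this, Finset.sum_empty] at hv
    linarith
  -- S d is bounded below
  have hSbdd : ∀ d, BddBelow (S d) := by
    intro d
    refine ⟨(Finset.univ : Finset Ω).inf' Finset.univ_nonempty (fun b => A b d), ?_⟩
    intro v hv
    obtain ⟨b, hb⟩ := hmem_wit d v hv
    exact le_trans (Finset.inf'_le _ (Finset.mem_univ b)) hb
  set qC : ℝ := sInf (S rC) with hqC
  -- qC ∈ S rC : the infimum is attained among the finitely many values A b rC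
  have key : ∀ v ∈ S rC, ∃ b : Ω, A b rC ≤ v ∧ A b rC ∈ S rC := by
    intro v hv
    obtain ⟨b0, hb0⟩ := hmem_wit rC v hv
    have hne : ((Finset.univ : Finset Ω).filter (fun b => A b rC ≤ v)).Nonempty :=
      ⟨b0, by simp [hb0]⟩
    obtain ⟨b, hbmem, hbeq⟩ := Finset.exists_mem_eq_sup' hne (fun b => A b rC)
    simp only [Finset.mem_filter, Finset.mem_univ, true_and] at hbmem
    refine ⟨b, hbmem, ?_⟩
    have hsub : (Finset.univ : Finset Ω).filter (fun c => A c rC ≤ v) ⊆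
        (Finset.univ : Finset Ω).filter (fun c => A c rC ≤ A b rC) := by
      intro c hc
      simp only [Finset.mem_filter, Finset.mem_univ, true_and] at hc ⊢
      rw [← hbeq]
      exact Finset.le_sup' (fun c => A c rC) (by simp [hc])
    have : G rC v ≤ G rC (A b rC) :=
      Finset.sum_le_sum_of_subset_of_nonneg hsub (fun c _ _ => hp0 c)
    simp only [hS, Set.mem_setOf_eq] at hv ⊢
    linarith
  have hqCmem : qC ∈ S rC := by
    obtain ⟨v, hv⟩ := hSne rC
    obtain ⟨b, hbv, hbS⟩ := key v hv
    -- consider the finset of values in S rC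
    set FS : Finset Ω := (Finset.univ : Finset Ω).filter (fun b => A b rC ∈ S rC) with hFS
    have hFSne : FS.Nonempty := ⟨b, by simp [hFS, hbS]⟩
    obtain ⟨b1, hb1mem, hb1eq⟩ := Finset.exists_mem_eq_inf' hFSne (fun b => A b rC)
    simp only [hFS, Finset.mem_filter, Finset.mem_univ, true_and] at hb1mem
    have hlb : ∀ w ∈ S rC, A b1 rC ≤ w := by
      intro w hw
      obtain ⟨c, hcw, hcS⟩ := key w hw
      have : A b1 rC ≤ A c rC := by
        rw [← hb1eq]
        exact Finset.inf'_le (fun b => A b rC) (by simp [hFS, hcS])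
      linarith
    have h1' : qC ≤ A b1 rC := csInf_le (hSbdd rC) hb1mem
    have h2' : A b1 rC ≤ qC := le_csInf (hSne rC) hlb
    have : qC = A b1 rC := le_antisymm h1' h2'
    rw [this]; exact hb1mem
  -- qC ≤ q (R z) for every z
  have hqle : ∀ z : Ω, qC ≤ sInf (S (R z)) := by
    intro z
    apply le_csInf (hSne (R z))
    intro w hw
    have hwS : w ∈ S rC := by
      simp only [hS, Set.mem_setOf_eq] at hw ⊢
      have hsub : (Finset.univ : Finset Ω).filter (fun b => A b (R z) ≤ w) ⊆
          (Finset.univ : Finset Ω).filter (fun b => A b rC ≤ w) := by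
        intro c hc
        simp only [Finset.mem_filter, Finset.mem_univ, true_and] at hc ⊢
        exact le_trans (h2 z c) hc
      have : G (R z) w ≤ G rC w :=
        Finset.sum_le_sum_of_subset_of_nonneg hsub (fun c _ _ => hp0 c)
      linarith
    exact csInf_le (hSbdd rC) hwS
  -- rejection set is contained in {z | A z rC > qC}
  have hsub : (Finset.univ : Finset Ω).filter (fun z =>
      A z (R z) > sInf {v : ℝ |
        1 - α ≤ ∑ b ∈ Finset.univ.filter (fun b => A b (R z) ≤ v), p b}) ⊆
      (Finset.univ : Finset Ω).filter (fun z => ¬ (A z rC ≤ qC)) := by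
    intro z hz
    simp only [Finset.mem_filter, Finset.mem_univ, true_and] at hz ⊢
    have : sInf (S (R z)) = sInf {v : ℝ |
        1 - α ≤ ∑ b ∈ Finset.univ.filter (fun b => A b (R z) ≤ v), p b} := rfl
    rw [← this] at hz
    have := hqle z
    have := h1 z
    push_neg
    linarith
  calc ∑ z ∈ Finset.univ.filter (fun z =>
        A z (R z) > sInf {v : ℝ |
          1 - α ≤ ∑ b ∈ Finset.univ.filter (fun b => A b (R z) ≤ v), p b}), p z
      ≤ ∑ z ∈ (Finset.univ : Finset Ω).filter (fun z => ¬ (A z rC ≤ qC)), p z :=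
        Finset.sum_le_sum_of_subset_of_nonneg hsub (fun c _ _ => hp0 c)
    _ ≤ α := by
        have hsplit := Finset.sum_filter_add_sum_filter_not (Finset.univ : Finset Ω)
          (fun z => A z rC ≤ qC) p
        have hG : 1 - α ≤ ∑ z ∈ (Finset.univ : Finset Ω).filter (fun z => A z rC ≤ qC), p z :=
          hqCmem
        rw [hsum] at hsplit
        linarith
end
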